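/- arXiv:1003.2362 — 2 statements merged into one kernel-verified Lean document; each statement's English description precedes it below -/
import Mathlib

section
/- Fix reals i, j > 0 with i + j = 1. If x = (x₁, x₂) ∈ ℝ² is not (i,j)-badly approximable (i.e., for every c > 0 there exists q ∈ ℕ with max{‖q x₁‖^{1/i}, ‖q x₂‖^{1/j}} < c/q), then there exists a strictly positive non-increasing function ψ₀ : ℕ → ℝ with ∑_{r=1}^∞ ψ₀(r) = ∞ such that the set of γ = (γ₁, γ₂) ∈ [0,1]² satisfying max{‖q x₁ − γ₁‖^{1/i}, ‖q x₂ − γ₂‖^{1/j}} ≤ ψ₀(|q|) for infinitely many nonzero integers q has 2-dimensional Lebesgue measure zero. -/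
open MeasureTheory Set Filter

/-- Distance to the nearest integer. -/
noncomputable def nint (y : ℝ) : ℝ := |y - (round y : ℝ)|

/-- `pw y e = y ^ (1/e)`, with the convention that `y ^ (1/0) = 0`. -/
noncomputable def pw (y e : ℝ) : ℝ := if e = 0 then 0 else y ^ (1 / e)

/-- A vector is irrational if `1, x₁, x₂` are linearly independent over `ℚ`. -/
def IrrVec (x : ℝ × ℝ) : Prop :=
  ∀ a b c : ℤ, (a : ℝ) * x.1 + (b : ℝ) * x.2 + (c : ℝ) = 0 → a = 0 ∧ b = 0 ∧ c = 0

/-- The set `Bad(i,j)` of `(i,j)`-badly approximable vectors. -/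
def Badij (i j : ℝ) (x : ℝ × ℝ) : Prop :=
  IrrVec x ∧ ∃ c > (0 : ℝ), ∀ q : ℕ, 0 < q →
    max (pw (nint (q * x.1)) i) (pw (nint (q * x.2)) j) > c / q

/-- The twisted well-approximable set `W^x_{(i,j)}(ψ)`. -/
def twistedW (x : ℝ × ℝ) (i j : ℝ) (ψ : ℕ → ℝ) : Set (ℝ × ℝ) :=
  {γ ∈ Set.Icc (0 : ℝ × ℝ) 1 |
    {q : ℤ | q ≠ 0 ∧
      max (pw (nint (q * x.1 - γ.1)) i) (pw (nint (q * x.2 - γ.2)) j)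
        ≤ ψ q.natAbs}.Infinite}


/-!
Pick denominators `q_K > R_{K-1}` with `(K+1)² ‖q_K x‖` tiny (arbitrarily large such `q_K`
exist since `x` is not badly approximable; if some `q x` is an integer vector, take its
multiples), set `R_K = (K+1)² q_K`, and let `ψ₀ = 1/R_K` on the block `(R_{K-1}, R_K]`.
Since `R_K ≥ 2 R_{K-1}`, every block contributes at least `1/2` to `∑ ψ₀`.
If `|q|` lies in block `K`, write `q = m q_K + r` with `0 ≤ r < q_K` and `|m| ≤ (K+1)²`; then
`‖r x - γ‖ ≤ ‖q x - γ‖ + |m| ‖q_K x‖ ≤ 2 (1/R_K)^i` (resp. `^j`) coordinatewise. So `γ` lies in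
`q_K` boxes of total area `≲ q_K (1/R_K)^(i+j) = 1/(K+1)²`, a summable sequence, and
Borel–Cantelli applies.
-/

open Topology

lemma nint_nonneg (y : ℝ) : 0 ≤ nint y := abs_nonneg _

lemma nint_zero : nint 0 = 0 := by simp [nint]

lemma nint_add_intCast (y : ℝ) (n : ℤ) : nint (y + n) = nint y := by
  simp only [nint, round_add_intCast, Int.cast_add, add_sub_add_right_eq_sub]

lemma nint_add_le (y z : ℝ) : nint (y + z) ≤ nint y + |z| :=
  calc nint (y + z) ≤ |y + z - round y| := round_le _ _
    _ = |(y - round y) + z| := by ring_nf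
    _ ≤ nint y + |z| := abs_add_le _ _

lemma nint_add_intCast_mul_le (y z : ℝ) (m : ℤ) :
    nint (y + m * z) ≤ nint y + |(m : ℝ)| * nint z := by
  have : y + m * z = (y + m * (z - round z)) + ((m * round z : ℤ) : ℝ) := by push_cast; ring
  rw [this, nint_add_intCast]
  calc nint (y + m * (z - round z)) ≤ nint y + |m * (z - round z)| := nint_add_le _ _
    _ = nint y + |(m : ℝ)| * nint z := by rw [abs_mul]; rfl

lemma nint_natCast_mul_eq_zero {z : ℝ} (hz : nint z = 0) (m : ℕ) : nint (m * z) = 0 := by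
  have h := nint_add_intCast_mul_le 0 z m
  rw [zero_add, nint_zero, hz, mul_zero, add_zero, Int.cast_natCast] at h
  exact h.antisymm (nint_nonneg _)

lemma pw_of_ne_zero (y : ℝ) {e : ℝ} (he : e ≠ 0) : pw y e = y ^ (1 / e) := if_neg he

lemma pw_zero_left {e : ℝ} (he : e ≠ 0) : pw 0 e = 0 := by
  rw [pw_of_ne_zero _ he, Real.zero_rpow (one_div_ne_zero he)]

lemma pw_pos {y e : ℝ} (hy : 0 < y) (he : e ≠ 0) : 0 < pw y e := by
  rw [pw_of_ne_zero _ he]; exact Real.rpow_pos_of_pos hy _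

lemma le_rpow_of_pw_le {y e t : ℝ} (hy : 0 ≤ y) (he : 0 < e) (h : pw y e ≤ t) : y ≤ t ^ e := by
  rw [pw_of_ne_zero _ he.ne'] at h
  calc y = (y ^ (1 / e)) ^ e := by rw [← Real.rpow_mul hy, one_div_mul_cancel he.ne', Real.rpow_one]
    _ ≤ t ^ e := Real.rpow_le_rpow (Real.rpow_nonneg hy _) h he.le

lemma volume_setOf_nint_sub_le (c a : ℝ) :
    volume {y ∈ Icc (0 : ℝ) 1 | nint (c - y) ≤ a} ≤ ENNReal.ofReal (6 * a) := by
  have hsub : {y ∈ Icc (0 : ℝ) 1 | nint (c - y) ≤ a} ⊆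
      ⋃ n ∈ Finset.Icc (⌊c⌋ - 1) (⌊c⌋ + 1), Icc (c - n - a) (c - n + a) := by
    rintro y ⟨⟨hy0, hy1⟩, hya⟩
    have hround := abs_le.1 (abs_sub_round (c - y))
    have hfloor := Int.floor_le c
    have hfloor' := Int.lt_floor_add_one c
    have hlo : ⌊c⌋ - 1 ≤ round (c - y) := by
      have : ((⌊c⌋ : ℤ) : ℝ) - 2 < round (c - y) := by linarith
      have : ⌊c⌋ - 2 < round (c - y) := by exact_mod_cast this
      omega
    have hhi : round (c - y) ≤ ⌊c⌋ + 1 := by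
      have : (round (c - y) : ℝ) < ⌊c⌋ + 2 := by linarith
      have : round (c - y) < ⌊c⌋ + 2 := by exact_mod_cast this
      omega
    have hdist := abs_le.1 hya
    refine Set.mem_biUnion (Finset.mem_Icc.2 ⟨hlo, hhi⟩) ⟨?_, ?_⟩ <;> linarith [hdist.1, hdist.2]
  calc _ ≤ volume (⋃ n ∈ Finset.Icc (⌊c⌋ - 1) (⌊c⌋ + 1), Icc (c - n - a) (c - n + a)) :=
        measure_mono hsub
    _ ≤ ∑ n ∈ Finset.Icc (⌊c⌋ - 1) (⌊c⌋ + 1), volume (Icc (c - n - a) (c - n + a)) :=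
        measure_biUnion_finset_le _ _
    _ = ∑ n ∈ Finset.Icc (⌊c⌋ - 1) (⌊c⌋ + 1), ENNReal.ofReal (2 * a) :=
        Finset.sum_congr rfl fun n _ => by rw [Real.volume_Icc]; ring_nf
    _ = ENNReal.ofReal (6 * a) := by
        rw [Finset.sum_const, Int.card_Icc, show (⌊c⌋ + 1 + 1 - (⌊c⌋ - 1)).toNat = 3 by omega,
          nsmul_eq_mul, ← ENNReal.ofReal_natCast, ← ENNReal.ofReal_mul (by positivity)]
        congr 1; push_cast; ring

lemma nint_emod_mul_sub_le (y z : ℝ) {q : ℤ} {n M : ℕ} (hn : 0 < n) (hq : q.natAbs ≤ M * n) :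
    nint ((q % n : ℤ) * y - z) ≤ nint (q * y - z) + M * nint (n * y) := by
  have hn' : (0 : ℤ) < n := by exact_mod_cast hn
  have hq' := abs_le.1 (show |q| ≤ M * n by rw [Int.abs_eq_natAbs]; exact_mod_cast hq)
  have hlo : -(M : ℤ) ≤ q / n := Int.le_ediv_of_mul_le hn' (by linarith)
  have hhi : q / n ≤ M := Int.ediv_le_of_le_mul hn' hq'.2
  have hM : |((-(q / n) : ℤ) : ℝ)| ≤ M := by
    have : |-(q / n)| ≤ (M : ℤ) := abs_le.2 ⟨by linarith, by linarith⟩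
    exact_mod_cast this
  calc nint ((q % n : ℤ) * y - z) = nint ((q * y - z) + (-(q / n) : ℤ) * (n * y)) := by
        rw [Int.emod_def]; push_cast; ring_nf
    _ ≤ nint (q * y - z) + |((-(q / n) : ℤ) : ℝ)| * nint (n * y) := nint_add_intCast_mul_le _ _ _
    _ ≤ nint (q * y - z) + M * nint (n * y) := by gcongr; exact nint_nonneg _

def approxCover (x : ℝ × ℝ) (n : ℕ) (a b : ℝ) : Set (ℝ × ℝ) :=
  ⋃ r ∈ Finset.range n,
    {y ∈ Icc (0 : ℝ) 1 | nint (r * x.1 - y) ≤ a} ×ˢ {y ∈ Icc (0 : ℝ) 1 | nint (r * x.2 - y) ≤ b}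

lemma volume_approxCover_le (x : ℝ × ℝ) (n : ℕ) {a b : ℝ} (ha : 0 ≤ a) :
    volume (approxCover x n a b) ≤ ENNReal.ofReal (36 * n * a * b) := by
  calc volume (approxCover x n a b)
      ≤ ∑ r ∈ Finset.range n, volume ({y ∈ Icc (0 : ℝ) 1 | nint (r * x.1 - y) ≤ a} ×ˢ
          {y ∈ Icc (0 : ℝ) 1 | nint (r * x.2 - y) ≤ b}) := measure_biUnion_finset_le _ _
    _ ≤ ∑ r ∈ Finset.range n, ENNReal.ofReal (36 * a * b) := by
        refine Finset.sum_le_sum fun r _ => ?_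
        rw [Measure.volume_eq_prod, Measure.prod_prod]
        calc _ ≤ ENNReal.ofReal (6 * a) * ENNReal.ofReal (6 * b) :=
              mul_le_mul' (volume_setOf_nint_sub_le _ _) (volume_setOf_nint_sub_le _ _)
          _ = ENNReal.ofReal (36 * a * b) := by rw [← ENNReal.ofReal_mul (by positivity)]; ring_nf
    _ = ENNReal.ofReal (36 * n * a * b) := by
        rw [Finset.sum_const, Finset.card_range, nsmul_eq_mul, ← ENNReal.ofReal_natCast,
          ← ENNReal.ofReal_mul (by positivity)]
        ring_nf

lemma mem_approxCover {x γ : ℝ × ℝ} (hγ : γ ∈ Icc 0 1) {q : ℤ} {n M : ℕ} (hn : 0 < n)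
    (hq : q.natAbs ≤ M * n) {a b : ℝ}
    (ha : nint (q * x.1 - γ.1) + M * nint (n * x.1) ≤ a)
    (hb : nint (q * x.2 - γ.2) + M * nint (n * x.2) ≤ b) :
    γ ∈ approxCover x n a b := by
  have hn' : (0 : ℤ) < n := by exact_mod_cast hn
  have hr : (((q % n).toNat : ℕ) : ℝ) = ((q % n : ℤ) : ℝ) := by
    exact_mod_cast Int.toNat_of_nonneg (Int.emod_nonneg q hn'.ne')
  have hrn : (q % n).toNat < n := by have := Int.emod_lt_of_pos q hn'; omega
  obtain ⟨⟨h0₁, h0₂⟩, ⟨h1₁, h1₂⟩⟩ := hγ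
  refine Set.mem_biUnion (Finset.mem_range.2 hrn) ⟨⟨⟨h0₁, h1₁⟩, ?_⟩, ⟨⟨h0₂, h1₂⟩, ?_⟩⟩
  · rw [hr]; exact (nint_emod_mul_sub_le _ _ hn hq).trans ha
  · rw [hr]; exact (nint_emod_mul_sub_le _ _ hn hq).trans hb

lemma not_summable_of_le_sum_Ioc {f : ℕ → ℝ} (hf : ∀ n, 0 ≤ f n) {N : ℕ → ℕ} (hN : Monotone N)
    {c : ℝ} (hc : 0 < c) (h : ∀ K, c ≤ ∑ r ∈ Finset.Ioc (N K) (N (K + 1)), f r) :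
    ¬ Summable f := by
  intro hs
  have hpartial (K : ℕ) : K * c ≤ ∑ r ∈ Finset.Ioc (N 0) (N K), f r := by
    induction K with
    | zero => simp
    | succ K ih =>
      rw [← Finset.sum_Ioc_consecutive _ (hN K.zero_le) (hN K.le_succ)]
      push_cast
      linarith [h K]
  obtain ⟨K, hK⟩ := exists_nat_gt ((∑' r, f r) / c)
  have := (hpartial K).trans (hs.sum_le_tsum _ fun r _ => hf r)
  rw [div_lt_iff₀ hc] at hK
  linarith

def blockEnd (q : ℕ → ℕ) (K : ℕ) : ℕ := (K + 1) ^ 2 * q K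

noncomputable def blockIndex (q : ℕ → ℕ) (r : ℕ) : ℕ := sInf {K | r ≤ blockEnd q K}

noncomputable def blockψ (q : ℕ → ℕ) (r : ℕ) : ℝ := ((blockEnd q (blockIndex q r) : ℕ) : ℝ)⁻¹

section Blocks

variable {q : ℕ → ℕ}

lemma blockEnd_pos (hq0 : ∀ K, 0 < q K) (K : ℕ) : 0 < blockEnd q K :=
  Nat.mul_pos (by positivity) (hq0 K)

lemma blockEnd_strictMono (hq : ∀ K, blockEnd q K < q (K + 1)) : StrictMono (blockEnd q) :=
  strictMono_nat_of_lt_succ fun K => (hq K).trans_le (Nat.le_mul_of_pos_left _ (by positivity))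

lemma two_mul_blockEnd_le (hq : ∀ K, blockEnd q K < q (K + 1)) (K : ℕ) :
    2 * blockEnd q K ≤ blockEnd q (K + 1) := by
  have h4 : 2 ^ 2 ≤ (K + 1 + 1) ^ 2 := Nat.pow_le_pow_left (by omega) 2
  have := hq K
  calc 2 * blockEnd q K ≤ 4 * q (K + 1) := by omega
    _ ≤ blockEnd q (K + 1) := Nat.mul_le_mul_right _ h4

lemma le_blockEnd_blockIndex (hE : StrictMono (blockEnd q)) (r : ℕ) :
    r ≤ blockEnd q (blockIndex q r) :=
  Nat.sInf_mem (s := {K | r ≤ blockEnd q K}) ⟨r, hE.le_apply⟩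

lemma blockIndex_le_iff (hE : StrictMono (blockEnd q)) {r K : ℕ} :
    blockIndex q r ≤ K ↔ r ≤ blockEnd q K :=
  ⟨fun h => (le_blockEnd_blockIndex hE r).trans (hE.monotone h), fun h => Nat.sInf_le h⟩

lemma blockψ_pos (hq0 : ∀ K, 0 < q K) (r : ℕ) : 0 < blockψ q r := by
  have := blockEnd_pos hq0 (blockIndex q r)
  unfold blockψ; positivity

lemma blockψ_antitone (hq0 : ∀ K, 0 < q K) (hq : ∀ K, blockEnd q K < q (K + 1)) :
    Antitone (blockψ q) := by
  intro r s hrs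
  have hE := blockEnd_strictMono hq
  have hidx : blockIndex q r ≤ blockIndex q s :=
    (blockIndex_le_iff hE).2 (hrs.trans (le_blockEnd_blockIndex hE s))
  have hpos := blockEnd_pos hq0 (blockIndex q r)
  exact inv_anti₀ (by exact_mod_cast hpos) (by exact_mod_cast hE.monotone hidx)

lemma blockψ_eq_of_mem_Ioc (hq : ∀ K, blockEnd q K < q (K + 1)) {K r : ℕ}
    (hr : r ∈ Finset.Ioc (blockEnd q K) (blockEnd q (K + 1))) :
    blockψ q r = ((blockEnd q (K + 1) : ℕ) : ℝ)⁻¹ := by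
  have hE := blockEnd_strictMono hq
  obtain ⟨hlo, hhi⟩ := Finset.mem_Ioc.1 hr
  have : blockIndex q r = K + 1 :=
    le_antisymm ((blockIndex_le_iff hE).2 hhi)
      (Nat.succ_le_of_lt (lt_of_not_ge fun h => (blockIndex_le_iff hE).1 h |>.not_gt hlo))
  rw [blockψ, this]

lemma not_summable_blockψ (hq0 : ∀ K, 0 < q K) (hq : ∀ K, blockEnd q K < q (K + 1)) :
    ¬ Summable (blockψ q) := by
  refine not_summable_of_le_sum_Ioc (fun r => (blockψ_pos hq0 r).le)
    (blockEnd_strictMono hq).monotone one_half_pos fun K => ?_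
  have hpos : (0 : ℝ) < blockEnd q (K + 1) := by exact_mod_cast blockEnd_pos hq0 (K + 1)
  have h2 : 2 * (blockEnd q K : ℝ) ≤ blockEnd q (K + 1) := by
    exact_mod_cast two_mul_blockEnd_le hq K
  rw [Finset.sum_congr rfl fun r hr => blockψ_eq_of_mem_Ioc hq hr, Finset.sum_const,
    Nat.card_Ioc, nsmul_eq_mul, Nat.cast_sub ((blockEnd_strictMono hq).monotone K.le_succ),
    ← div_eq_mul_inv, le_div_iff₀ hpos]
  linarith

end Blocks

section Measure

variable {i j : ℝ} {x : ℝ × ℝ} {q : ℕ → ℕ}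

lemma twistedW_blockψ_subset (hi : 0 < i) (hj : 0 < j) (hq0 : ∀ K, 0 < q K)
    (hq : ∀ K, blockEnd q K < q (K + 1))
    (hx₁ : ∀ K, ((K + 1) ^ 2 : ℕ) * nint (q K * x.1) ≤ ((blockEnd q K : ℝ)⁻¹) ^ i)
    (hx₂ : ∀ K, ((K + 1) ^ 2 : ℕ) * nint (q K * x.2) ≤ ((blockEnd q K : ℝ)⁻¹) ^ j) :
    twistedW x i j (blockψ q) ⊆ {γ | ∃ᶠ K in atTop,
      γ ∈ approxCover x (q K) (2 * ((blockEnd q K : ℝ)⁻¹) ^ i) (2 * ((blockEnd q K : ℝ)⁻¹) ^ j)} := by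
  have hE := blockEnd_strictMono hq
  rintro γ ⟨hγ, hinf⟩
  refine frequently_atTop.2 fun N => ?_
  obtain ⟨n, ⟨-, hn⟩, hnN⟩ :=
    hinf.exists_notMem_finite (Set.finite_Icc (-(blockEnd q N : ℤ)) (blockEnd q N))
  have hNK : N ≤ blockIndex q n.natAbs := by
    by_contra! h
    have := (blockIndex_le_iff hE).1 h.le
    exact hnN (Set.mem_Icc.2 ⟨by omega, by omega⟩)
  set K := blockIndex q n.natAbs
  have hψ : blockψ q n.natAbs = (blockEnd q K : ℝ)⁻¹ := rfl
  rw [hψ] at hn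
  refine ⟨K, hNK, mem_approxCover hγ (hq0 K) (le_blockEnd_blockIndex hE _) ?_ ?_⟩
  · linarith [le_rpow_of_pw_le (nint_nonneg _) hi ((le_max_left _ _).trans hn), hx₁ K]
  · linarith [le_rpow_of_pw_le (nint_nonneg _) hj ((le_max_right _ _).trans hn), hx₂ K]

lemma volume_approxCover_blockEnd_le (hij : i + j = 1) (hq0 : ∀ K, 0 < q K) (K : ℕ) :
    volume (approxCover x (q K) (2 * ((blockEnd q K : ℝ)⁻¹) ^ i) (2 * ((blockEnd q K : ℝ)⁻¹) ^ j))
      ≤ ENNReal.ofReal (144 / ((K + 1 : ℕ) : ℝ) ^ 2) := by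
  have hpos : (0 : ℝ) < q K := by exact_mod_cast hq0 K
  have hE0 : (0 : ℝ) < blockEnd q K := by exact_mod_cast blockEnd_pos hq0 K
  have hE : ((blockEnd q K : ℕ) : ℝ) = ((K + 1 : ℕ) : ℝ) ^ 2 * q K := by
    simp [blockEnd]
  refine (volume_approxCover_le _ _ (by positivity)).trans_eq (congrArg ENNReal.ofReal ?_)
  calc 36 * q K * (2 * ((blockEnd q K : ℝ)⁻¹) ^ i) * (2 * ((blockEnd q K : ℝ)⁻¹) ^ j)
      = 144 * q K * ((blockEnd q K : ℝ)⁻¹) ^ (i + j) := by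
        rw [Real.rpow_add (inv_pos.2 hE0)]; ring
    _ = 144 / ((K + 1 : ℕ) : ℝ) ^ 2 := by
        rw [hij, Real.rpow_one, hE]; field_simp

lemma volume_twistedW_blockψ (hi : 0 < i) (hj : 0 < j) (hij : i + j = 1) (hq0 : ∀ K, 0 < q K)
    (hq : ∀ K, blockEnd q K < q (K + 1))
    (hx₁ : ∀ K, ((K + 1) ^ 2 : ℕ) * nint (q K * x.1) ≤ ((blockEnd q K : ℝ)⁻¹) ^ i)
    (hx₂ : ∀ K, ((K + 1) ^ 2 : ℕ) * nint (q K * x.2) ≤ ((blockEnd q K : ℝ)⁻¹) ^ j) :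
    volume (twistedW x i j (blockψ q)) = 0 := by
  have hsum : Summable fun K : ℕ => 144 / ((K + 1 : ℕ) : ℝ) ^ 2 :=
    ((summable_nat_add_iff 1).2 ((Real.summable_one_div_nat_pow.2 one_lt_two).mul_left 144)).congr
      fun K => by ring
  refine measure_mono_null (twistedW_blockψ_subset hi hj hq0 hq hx₁ hx₂)
    (measure_setOfPred_frequently_eq_zero (ne_top_of_le_ne_top ?_
      (ENNReal.tsum_le_tsum fun K => volume_approxCover_blockEnd_le hij hq0 K)))
  rw [← ENNReal.ofReal_tsum_of_nonneg (fun K => by positivity) hsum]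
  exact ENNReal.ofReal_ne_top

end Measure

lemma frequently_lt_div_of_pos {v : ℕ → ℝ} (hv : ∀ c > 0, ∃ n : ℕ, 0 < n ∧ v n < c / n)
    (hpos : ∀ n, 0 < n → 0 < v n) {c : ℝ} (hc : 0 < c) :
    ∃ᶠ n in atTop, v n < c / n := by
  by_contra h
  obtain ⟨N, hN⟩ := eventually_atTop.1 (not_frequently.1 h)
  have hsmall : ∀ᶠ c' in 𝓝[>] (0 : ℝ), c' ≤ c ∧ ∀ n ∈ Finset.range N, 0 < n → c' ≤ n * v n := by
    refine (eventually_nhdsWithin_of_eventually_nhds (eventually_le_nhds hc)).and ?_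
    rw [Filter.eventually_all_finset]
    intro n _
    rcases n.eq_zero_or_pos with rfl | hn
    · exact Eventually.of_forall fun _ h => absurd h (lt_irrefl 0)
    · have : (0 : ℝ) < n * v n := mul_pos (by exact_mod_cast hn) (hpos n hn)
      exact (eventually_nhdsWithin_of_eventually_nhds (eventually_le_nhds this)).mono fun _ h _ => h
  obtain ⟨c', ⟨hc'c, hc'n⟩, hc'⟩ := (hsmall.and self_mem_nhdsWithin).exists
  obtain ⟨n, hn, hvn⟩ := hv c' hc'
  have hn' : (0 : ℝ) < n := by exact_mod_cast hn
  rcases lt_or_ge n N with hnN | hnN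
  · have := hc'n n (Finset.mem_range.2 hnN) hn
    rw [lt_div_iff₀ hn'] at hvn
    linarith
  · exact hN n hnN (hvn.trans_le (by gcongr))

lemma frequently_max_pw_lt_div {i j : ℝ} (hi : 0 < i) (hj : 0 < j) {x : ℝ × ℝ}
    (hnotbad : ∀ c > (0 : ℝ), ∃ q : ℕ, 0 < q ∧
      max (pw (nint (q * x.1)) i) (pw (nint (q * x.2)) j) < c / q)
    {c : ℝ} (hc : 0 < c) :
    ∃ᶠ n : ℕ in atTop, max (pw (nint (n * x.1)) i) (pw (nint (n * x.2)) j) < c / n := by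
  by_cases hrat : ∃ n₀ : ℕ, 0 < n₀ ∧ nint (n₀ * x.1) = 0 ∧ nint (n₀ * x.2) = 0
  · obtain ⟨n₀, hn₀, h₁, h₂⟩ := hrat
    refine frequently_atTop.2 fun N => ⟨(N + 1) * n₀, Nat.le_mul_of_pos_right _ hn₀ |>.trans' N.le_succ, ?_⟩
    rw [Nat.cast_mul, mul_assoc, mul_assoc, nint_natCast_mul_eq_zero h₁,
      nint_natCast_mul_eq_zero h₂, pw_zero_left hi.ne', pw_zero_left hj.ne', max_self]
    have : 0 < (N + 1) * n₀ := Nat.mul_pos N.succ_pos hn₀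
    positivity
  · push Not at hrat
    refine frequently_lt_div_of_pos hnotbad (fun n hn => ?_) hc
    rcases (nint_nonneg (n * x.1)).eq_or_lt with h₁ | h₁
    · exact lt_max_of_lt_right
        (pw_pos ((nint_nonneg _).lt_of_ne (hrat n hn h₁.symm).symm) hj.ne')
    · exact lt_max_of_lt_left (pw_pos h₁ hi.ne')

lemma mul_le_rpow_of_pw_le {y e c M n : ℝ} (hy : 0 ≤ y) (he : 0 < e) (hM : 0 < M) (hn : 0 < n)
    (hc : 0 ≤ c) (hcM : c ≤ (M ^ (1 / e) * M)⁻¹) (h : pw y e ≤ c / n) :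
    M * y ≤ ((M * n)⁻¹) ^ e :=
  calc M * y ≤ M * (c / n) ^ e := by gcongr; exact le_rpow_of_pw_le hy he h
    _ ≤ M * ((M ^ (1 / e) * (M * n))⁻¹) ^ e := by
        gcongr
        rw [← mul_assoc, mul_inv, ← div_eq_mul_inv]
        gcongr
    _ = ((M * n)⁻¹) ^ e := by
        rw [mul_inv, Real.mul_rpow (by positivity) (by positivity), Real.inv_rpow (by positivity),
          ← Real.rpow_mul hM.le, one_div_mul_cancel he.ne', Real.rpow_one, ← mul_assoc,
          mul_inv_cancel₀ hM.ne', one_mul]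

lemma exists_seq_of_frequently {P : ℕ → ℕ → Prop} (h : ∀ K, ∃ᶠ n in atTop, P K n)
    (f : ℕ → ℕ → ℕ) : ∃ q : ℕ → ℕ, (∀ K, P K (q K)) ∧ ∀ K, f K (q K) < q (K + 1) := by
  choose g hg using fun K N => (h K).forall_exists_of_atTop N
  let q : ℕ → ℕ := fun K => Nat.rec (g 0 0) (fun K qK => g (K + 1) (f K qK + 1)) K
  refine ⟨q, fun K => ?_, fun K => (hg (K + 1) _).1⟩
  cases K <;> exact (hg _ _).2

lemma exists_blockEnd_seq {i j : ℝ} (hi : 0 < i) (hj : 0 < j) {x : ℝ × ℝ}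
    (hnotbad : ∀ c > (0 : ℝ), ∃ q : ℕ, 0 < q ∧
      max (pw (nint (q * x.1)) i) (pw (nint (q * x.2)) j) < c / q) :
    ∃ q : ℕ → ℕ, (∀ K, 0 < q K) ∧ (∀ K, blockEnd q K < q (K + 1)) ∧
      (∀ K, ((K + 1) ^ 2 : ℕ) * nint (q K * x.1) ≤ ((blockEnd q K : ℝ)⁻¹) ^ i) ∧
      (∀ K, ((K + 1) ^ 2 : ℕ) * nint (q K * x.2) ≤ ((blockEnd q K : ℝ)⁻¹) ^ j) := by
  have hP (K : ℕ) : ∃ᶠ n : ℕ in atTop, 0 < n ∧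
      ((K + 1) ^ 2 : ℕ) * nint (n * x.1) ≤ ((((K + 1) ^ 2 * n : ℕ) : ℝ)⁻¹) ^ i ∧
      ((K + 1) ^ 2 : ℕ) * nint (n * x.2) ≤ ((((K + 1) ^ 2 * n : ℕ) : ℝ)⁻¹) ^ j := by
    set M : ℝ := (((K + 1) ^ 2 : ℕ) : ℝ)
    have hM : 0 < M := by positivity
    have hc : 0 < min (M ^ (1 / i) * M)⁻¹ (M ^ (1 / j) * M)⁻¹ := by positivity
    refine ((frequently_max_pw_lt_div hi hj hnotbad hc).and_eventually
      (eventually_gt_atTop 0)).mono fun n ⟨hlt, hn⟩ => ⟨hn, ?_, ?_⟩ <;> rw [Nat.cast_mul]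
    · exact mul_le_rpow_of_pw_le (nint_nonneg _) hi hM (by exact_mod_cast hn) hc.le
        (min_le_left _ _) ((le_max_left _ _).trans hlt.le)
    · exact mul_le_rpow_of_pw_le (nint_nonneg _) hj hM (by exact_mod_cast hn) hc.le
        (min_le_right _ _) ((le_max_right _ _).trans hlt.le)
  obtain ⟨q, hq, hgrowth⟩ := exists_seq_of_frequently hP fun K n => (K + 1) ^ 2 * n
  exact ⟨q, fun K => (hq K).1, hgrowth, fun K => (hq K).2.1, fun K => (hq K).2.2⟩

theorem stmt9 (i j : ℝ) (hi : 0 < i) (hj : 0 < j) (hij : i + j = 1)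
    (x : ℝ × ℝ)
    (hnotbad : ∀ c > (0 : ℝ), ∃ q : ℕ, 0 < q ∧
      max (pw (nint (q * x.1)) i) (pw (nint (q * x.2)) j) < c / q) :
    ∃ ψ₀ : ℕ → ℝ, (∀ r, 0 < ψ₀ r) ∧ Antitone ψ₀ ∧ ¬ Summable ψ₀ ∧
      volume (twistedW x i j ψ₀) = 0 := by
  obtain ⟨q, hq0, hq, hx₁, hx₂⟩ := exists_blockEnd_seq hi hj hnotbad
  exact ⟨blockψ q, blockψ_pos hq0, blockψ_antitone hq0 hq, not_summable_blockψ hq0 hq,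
    volume_twistedW_blockψ hi hj hij hq0 hq hx₁ hx₂⟩
end

section
/- Fix reals i, j > 0 with i + j = 1 and let x ∈ Bad(i,j). Then for every strictly positive non-increasing function ψ : ℕ → ℝ with ∑_{r=1}^∞ ψ(r) = ∞, the set W^x_{(i,j)}(ψ) of γ ∈ [0,1]² satisfying max{‖q x₁ − γ₁‖^{1/i}, ‖q x₂ − γ₂‖^{1/j}} ≤ ψ(|q|) for infinitely many nonzero integers q has 2-dimensional Lebesgue measure at least some positive constant (in particular, positive measure). -/
open MeasureTheory Set Filter

/-!
Reduce mod 1 to the torus `𝕋² = (ℝ/ℤ)²`: a point lies in `W^x_{(i,j)}(ψ)` once it lies in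
infinitely many boxes `B_q = ball(q x₁, ψ(q)^i) × ball(q x₂, ψ(q)^j)`, and since `i + j = 1` each
`B_q` has measure between `ψ(q)` and `4 ψ(q)` (for `ψ ≤ 1`). If `B_q` meets `B_s` with `s > q`, then
`(s - q) x` lies within `2 ψ(q)^i`, `2 ψ(q)^j` of `0` in the two coordinates, so the badly
approximable property keeps all such `s` pairwise `≫ 1 / ψ(q)` apart; summing,
`∑_{q < s < M} |B_q ∩ B_s| ≪ ψ(q) ∑_{r < M} ψ(r)`. The Chung–Erdős inequality
`|⋃ B_q| ≥ (∑ |B_q|)² / ∑∑ |B_q ∩ B_s|` then bounds every tail union `⋃_{N ≤ q < M} B_q` from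
below by a constant once `∑ ψ` is large, hence also the limsup set.
-/

open scoped ENNReal

theorem lintegral_sq_le_measure_mul_lintegral_sq {α : Type*} [MeasurableSpace α] (μ : Measure α)
    {f : α → ℝ≥0∞} {U : Set α} (hf : Measurable f) (hU : MeasurableSet U)
    (hfU : ∀ a ∉ U, f a = 0) :
    (∫⁻ a, f a ∂μ) ^ 2 ≤ μ U * ∫⁻ a, f a ^ 2 ∂μ := by
  have hfU' : f = f * U.indicator 1 := by
    ext a
    by_cases ha : a ∈ U <;> simp [ha, hfU]
  have hind : ∀ a, U.indicator (1 : α → ℝ≥0∞) a ^ (2 : ℝ) = U.indicator 1 a := fun a => by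
    by_cases ha : a ∈ U <;> simp [ha]
  have hHolder := ENNReal.lintegral_mul_le_Lp_mul_Lq μ Real.HolderConjugate.two_two
    hf.aemeasurable (measurable_one.indicator hU).aemeasurable
  simp only [← hfU', hind, lintegral_indicator_one hU, ENNReal.rpow_two] at hHolder
  calc (∫⁻ a, f a ∂μ) ^ 2
      ≤ ((∫⁻ a, f a ^ 2 ∂μ) ^ (1 / 2 : ℝ) * μ U ^ (1 / 2 : ℝ)) ^ 2 := by gcongr
    _ = μ U * ∫⁻ a, f a ^ 2 ∂μ := by
      rw [mul_pow, ← ENNReal.rpow_natCast, ← ENNReal.rpow_natCast (μ U ^ _), ← ENNReal.rpow_mul,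
        ← ENNReal.rpow_mul]
      norm_num [mul_comm]

theorem sq_sum_measure_le_measure_biUnion_mul {α ι : Type*} [MeasurableSpace α] (μ : Measure α)
    (s : Finset ι) {A : ι → Set α} (hA : ∀ q, MeasurableSet (A q)) :
    (∑ q ∈ s, μ (A q)) ^ 2 ≤ μ (⋃ q ∈ s, A q) * ∑ q ∈ s, ∑ r ∈ s, μ (A q ∩ A r) := by
  set f : α → ℝ≥0∞ := fun a => ∑ q ∈ s, (A q).indicator 1 a
  have hf : Measurable f := Finset.measurable_sum _ fun q _ => measurable_one.indicator (hA q)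
  have hfU : ∀ a ∉ ⋃ q ∈ s, A q, f a = 0 := fun a ha =>
    Finset.sum_eq_zero fun q hq => indicator_of_notMem (fun haq => ha (mem_biUnion hq haq)) _
  have hint : ∫⁻ a, f a ∂μ = ∑ q ∈ s, μ (A q) := by
    rw [lintegral_finsetSum _ fun q _ => measurable_one.indicator (hA q)]
    simp only [lintegral_indicator_one (hA _)]
  have hint_sq : ∫⁻ a, f a ^ 2 ∂μ = ∑ q ∈ s, ∑ r ∈ s, μ (A q ∩ A r) := by
    have hsq : ∀ a, f a ^ 2 = ∑ q ∈ s, ∑ r ∈ s, (A q ∩ A r).indicator 1 a := fun a => by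
      simp only [f, sq, Finset.sum_mul_sum, inter_indicator_one, Pi.mul_apply]
    simp_rw [hsq]
    rw [lintegral_finsetSum _ fun q _ => Finset.measurable_sum _ fun r _ =>
      measurable_one.indicator ((hA q).inter (hA r))]
    refine Finset.sum_congr rfl fun q _ => ?_
    rw [lintegral_finsetSum _ fun r _ => measurable_one.indicator ((hA q).inter (hA r))]
    simp only [lintegral_indicator_one ((hA _).inter (hA _))]
  rw [← hint, ← hint_sq]
  exact lintegral_sq_le_measure_mul_lintegral_sq μ hf
    (Finset.measurableSet_biUnion s fun q _ => hA q) hfU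

theorem sq_sum_measureReal_le_measureReal_biUnion_mul {α ι : Type*} [MeasurableSpace α]
    (μ : Measure α) [IsFiniteMeasure μ] (s : Finset ι) {A : ι → Set α}
    (hA : ∀ q, MeasurableSet (A q)) :
    (∑ q ∈ s, μ.real (A q)) ^ 2 ≤
      μ.real (⋃ q ∈ s, A q) * ∑ q ∈ s, ∑ r ∈ s, μ.real (A q ∩ A r) := by
  have hrow : ∀ q, ∑ r ∈ s, μ (A q ∩ A r) ≠ ∞ := fun q =>
    ENNReal.sum_ne_top.2 fun _ _ => measure_ne_top _ _
  have h := ENNReal.toReal_mono (ENNReal.mul_ne_top (measure_ne_top _ _)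
    (ENNReal.sum_ne_top.2 fun q _ => hrow q)) (sq_sum_measure_le_measure_biUnion_mul μ s hA)
  rw [ENNReal.toReal_pow, ENNReal.toReal_mul, ENNReal.toReal_sum fun q _ => hrow q] at h
  simpa only [ENNReal.toReal_sum fun _ _ => measure_ne_top _ _, measureReal_def] using h

theorem Finset.sum_sum_eq_sum_diag_add_two_nsmul {ι M : Type*} [LinearOrder ι]
    [AddCommMonoid M] (s : Finset ι) {f : ι → ι → M} (hf : ∀ a b, f a b = f b a) :
    ∑ a ∈ s, ∑ b ∈ s, f a b = ∑ a ∈ s, f a a + 2 • ∑ a ∈ s, ∑ b ∈ s with a < b, f a b := by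
  have hrow : ∀ a ∈ s, ∑ b ∈ s, f a b =
      f a a + (∑ b ∈ s with a < b, f a b + ∑ b ∈ s with b < a, f a b) := by
    intro a ha
    have hsplit : s.erase a = {b ∈ s | a < b} ∪ {b ∈ s | b < a} := by
      ext b
      simp only [Finset.mem_erase, Finset.mem_union, Finset.mem_filter]
      constructor
      · rintro ⟨hba, hb⟩
        rcases lt_or_gt_of_ne hba with h | h <;> tauto
      · rintro (⟨hb, h⟩ | ⟨hb, h⟩) <;> exact ⟨by rintro rfl; exact lt_irrefl _ h, hb⟩
    rw [← Finset.add_sum_erase s _ ha, hsplit, Finset.sum_union (Finset.disjoint_filter.2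
      fun b _ h₁ h₂ => lt_asymm h₁ h₂)]
  have hswap : ∑ a ∈ s, ∑ b ∈ s with b < a, f a b = ∑ a ∈ s, ∑ b ∈ s with a < b, f a b := by
    rw [Finset.sum_comm' (t' := s) (s' := fun b => s.filter (b < ·))]
    · simp_rw [hf]
    · intro a b
      simp only [Finset.mem_filter]
      tauto
  rw [Finset.sum_congr rfl hrow, Finset.sum_add_distrib, Finset.sum_add_distrib, hswap,
    two_nsmul]

theorem le_measure_limsup_atTop {α : Type*} [MeasurableSpace α] {μ : Measure α}
    [IsFiniteMeasure μ] {A : ℕ → Set α} (hA : ∀ n, MeasurableSet (A n)) {κ : ℝ≥0∞}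
    (h : ∀ N, κ ≤ μ (⋃ n ≥ N, A n)) : κ ≤ μ (limsup A atTop) := by
  rw [limsup_eq_iInf_iSup_of_nat]
  refine ge_of_tendsto' (tendsto_measure_iInter_atTop (fun N => ?_) ?_
    ⟨0, measure_ne_top _ _⟩) h
  · exact (MeasurableSet.biUnion (to_countable _) fun n _ => hA n).nullMeasurableSet
  · exact fun N N' hN => biUnion_subset_biUnion_left fun n hn => le_trans hN hn

theorem natCast_mul_sum_le_sum_range_of_separated {ψ : ℕ → ℝ} (hψ : ∀ r, 0 ≤ ψ r)
    (hanti : Antitone ψ) {F : Finset ℕ} {M n : ℕ} (hF : F ⊆ Finset.range M)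
    (hfirst : ∀ t ∈ F, n ≤ t) (hgap : ∀ t ∈ F, ∀ t' ∈ F, t < t' → t + n ≤ t') :
    n * ∑ t ∈ F, ψ t ≤ ∑ r ∈ Finset.range M, ψ r := by
  set block : ℕ → Finset ℕ := fun t => Finset.Ioc (t - n) t
  have hdisj : (F : Set ℕ).PairwiseDisjoint block := by
    intro t ht t' ht' hne
    refine Finset.disjoint_left.2 fun r hr hr' => ?_
    simp only [block, Finset.mem_Ioc] at hr hr'
    rcases lt_or_gt_of_ne hne with h | h
    · have := hgap t ht t' ht' h
      omega
    · have := hgap t' ht' t ht h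
      omega
  calc n * ∑ t ∈ F, ψ t = ∑ t ∈ F, ∑ _r ∈ block t, ψ t := by
        rw [Finset.mul_sum]
        refine Finset.sum_congr rfl fun t ht => ?_
        rw [Finset.sum_const, Nat.card_Ioc, nsmul_eq_mul, Nat.sub_sub_self (hfirst t ht)]
    _ ≤ ∑ t ∈ F, ∑ r ∈ block t, ψ r := by
        gcongr with t _ r hr
        exact hanti (Finset.mem_Ioc.1 hr).2
    _ = ∑ r ∈ F.biUnion block, ψ r := (Finset.sum_biUnion hdisj).symm
    _ ≤ ∑ r ∈ Finset.range M, ψ r := by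
        refine Finset.sum_le_sum_of_subset_of_nonneg (fun r hr => ?_) fun r _ _ => hψ r
        obtain ⟨t, ht, hr⟩ := Finset.mem_biUnion.1 hr
        have := Finset.mem_range.1 (hF ht)
        simp only [block, Finset.mem_Ioc] at hr
        exact Finset.mem_range.2 (by omega)

theorem sum_le_two_div_mul_sum_range_of_separated {ψ : ℕ → ℝ} (hψ : ∀ r, 0 ≤ ψ r)
    (hanti : Antitone ψ) {g : ℝ} (hg : 0 < g) {F : Finset ℕ} {M : ℕ} (hF : F ⊆ Finset.range M)
    (hfirst : ∀ t ∈ F, g < t) (hgap : ∀ t ∈ F, ∀ t' ∈ F, t < t' → t + g < t') :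
    ∑ t ∈ F, ψ t ≤ 2 / g * ∑ r ∈ Finset.range M, ψ r := by
  set n := ⌊g⌋₊
  have hn : (n : ℝ) ≤ g := Nat.floor_le hg.le
  have hblocks := natCast_mul_sum_le_sum_range_of_separated hψ hanti hF
    (fun t ht => by exact_mod_cast hn.trans (hfirst t ht).le)
    (fun t ht t' ht' h => by
      have := hgap t ht t' ht' h
      exact_mod_cast (show (t + n : ℝ) ≤ t' by linarith))
  have hsub : ∑ t ∈ F, ψ t ≤ ∑ r ∈ Finset.range M, ψ r :=
    Finset.sum_le_sum_of_subset_of_nonneg hF fun r _ _ => hψ r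
  have hgn : g < n + 1 := Nat.lt_floor_add_one g
  have hF0 : 0 ≤ ∑ t ∈ F, ψ t := Finset.sum_nonneg fun t _ => hψ t
  -- `hblocks + hsub` reads `(⌊g⌋₊ + 1) * ∑ ψ ≤ 2 * ∑ ψ`, and `g < ⌊g⌋₊ + 1`
  rw [div_mul_eq_mul_div, le_div_iff₀ hg]
  nlinarith

open Metric

local notation "𝕋" => UnitAddCircle

lemma nint_eq_norm (y : ℝ) : nint y = ‖(y : 𝕋)‖ := by
  rw [UnitAddCircle.norm_eq, nint]

lemma coe_natCast_mul (t : ℕ) (y : ℝ) : (((t * y : ℝ)) : 𝕋) = t • (y : 𝕋) := by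
  rw [← nsmul_eq_mul, AddCircle.coe_nsmul]

lemma pw_le_of_le_rpow {y e δ : ℝ} (he : 0 < e) (hy : 0 ≤ y) (hδ : 0 ≤ δ) (h : y ≤ δ ^ e) :
    pw y e ≤ δ := by
  rw [pw, if_neg he.ne', one_div, Real.rpow_inv_le_iff_of_pos hy hδ he]
  exact h

def BadWith (i j c : ℝ) (x : ℝ × ℝ) : Prop :=
  ∀ q : ℕ, 0 < q → max (pw (nint (q * x.1)) i) (pw (nint (q * x.2)) j) > c / q

/-- Chosen so that `4 * ρ ^ e ≤ (sepConst i j * ρ) ^ e` for `e = i, j`. -/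
noncomputable def sepConst (i j : ℝ) : ℝ := max (4 ^ (1 / i)) (4 ^ (1 / j))

lemma sepConst_pos (i j : ℝ) : 0 < sepConst i j :=
  lt_max_of_lt_left (Real.rpow_pos_of_pos (by norm_num) _)

lemma four_le_rpow_of_le {A e : ℝ} (he : 0 < e) (hA : 4 ^ (1 / e) ≤ A) : 4 ≤ A ^ e := by
  calc (4 : ℝ) = (4 ^ (1 / e)) ^ e := by
        rw [← Real.rpow_mul (by norm_num), one_div_mul_cancel he.ne', Real.rpow_one]
    _ ≤ A ^ e := by gcongr

lemma four_mul_rpow_le {i j e ρ : ℝ} (he : 0 < e) (hρ : 0 ≤ ρ)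
    (hA : 4 ^ (1 / e) ≤ sepConst i j) : 4 * ρ ^ e ≤ (sepConst i j * ρ) ^ e := by
  rw [Real.mul_rpow (sepConst_pos i j).le hρ]
  gcongr
  exact four_le_rpow_of_le he hA

lemma BadWith.div_lt {i j c : ℝ} {x : ℝ × ℝ} (hbad : BadWith i j c x) (hi : 0 < i) (hj : 0 < j)
    {ρ : ℝ} (hρ : 0 < ρ) {t : ℕ} (ht : 0 < t) (h₁ : ‖t • (x.1 : 𝕋)‖ ≤ 4 * ρ ^ i)
    (h₂ : ‖t • (x.2 : 𝕋)‖ ≤ 4 * ρ ^ j) : c / (sepConst i j * ρ) < t := by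
  have hA := mul_pos (sepConst_pos i j) hρ
  have hbound : ∀ {e : ℝ} {y : ℝ}, 0 < e → 4 ^ (1 / e) ≤ sepConst i j →
      ‖t • (y : 𝕋)‖ ≤ 4 * ρ ^ e → pw (nint (t * y)) e ≤ sepConst i j * ρ :=
    fun he hAe h => by
      rw [nint_eq_norm, coe_natCast_mul]
      exact pw_le_of_le_rpow he (norm_nonneg _) hA.le (h.trans (four_mul_rpow_le he hρ.le hAe))
  have hct : c / t < sepConst i j * ρ := (hbad t ht).trans_le
    (max_le (hbound hi (le_max_left _ _) h₁) (hbound hj (le_max_right _ _) h₂))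
  rwa [div_lt_comm₀ (by exact_mod_cast ht) hA] at hct

/-- `γ` satisfies the approximation inequality of `twistedW` at `q > 0` iff `γ mod 1` lies in
this box. -/
def approxBox (x : ℝ × ℝ) (i j : ℝ) (ψ : ℕ → ℝ) (q : ℕ) : Set (𝕋 × 𝕋) :=
  closedBall (q • (x.1 : 𝕋)) (ψ q ^ i) ×ˢ closedBall (q • (x.2 : 𝕋)) (ψ q ^ j)

lemma measurableSet_approxBox (x : ℝ × ℝ) (i j : ℝ) (ψ : ℕ → ℝ) (q : ℕ) :
    MeasurableSet (approxBox x i j ψ q) :=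
  measurableSet_closedBall.prod measurableSet_closedBall

lemma measureReal_approxBox (x : ℝ × ℝ) (i j : ℝ) {ψ : ℕ → ℝ} {q : ℕ} (hψ : 0 ≤ ψ q) :
    volume.real (approxBox x i j ψ q) = min 1 (2 * ψ q ^ i) * min 1 (2 * ψ q ^ j) := by
  rw [measureReal_def, approxBox, Measure.volume_eq_prod, Measure.prod_prod,
    AddCircle.volume_closedBall, AddCircle.volume_closedBall, ENNReal.toReal_mul,
    ENNReal.toReal_ofReal (le_min zero_le_one (by positivity)),
    ENNReal.toReal_ofReal (le_min zero_le_one (by positivity))]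

lemma rpow_mul_rpow_of_add_eq_one {i j r : ℝ} (hij : i + j = 1) (hr : 0 ≤ r) :
    r ^ i * r ^ j = r := by
  rw [← Real.rpow_add' hr (by rw [hij]; exact one_ne_zero), hij, Real.rpow_one]

lemma measureReal_approxBox_le (x : ℝ × ℝ) {i j : ℝ} (hij : i + j = 1) {ψ : ℕ → ℝ} {q : ℕ}
    (hψ : 0 ≤ ψ q) : volume.real (approxBox x i j ψ q) ≤ 4 * ψ q := by
  rw [measureReal_approxBox x i j hψ]
  calc min 1 (2 * ψ q ^ i) * min 1 (2 * ψ q ^ j) ≤ (2 * ψ q ^ i) * (2 * ψ q ^ j) := by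
        have := Real.rpow_nonneg hψ j
        exact mul_le_mul (min_le_right _ _) (min_le_right _ _) (le_min zero_le_one (by positivity))
          (by positivity)
    _ = 4 * (ψ q ^ i * ψ q ^ j) := by ring
    _ = 4 * ψ q := by rw [rpow_mul_rpow_of_add_eq_one hij hψ]

lemma le_measureReal_approxBox (x : ℝ × ℝ) {i j : ℝ} (hi : 0 < i) (hj : 0 < j) (hij : i + j = 1)
    {ψ : ℕ → ℝ} {q : ℕ} (hψ : 0 ≤ ψ q) (hψ₁ : ψ q ≤ 1) :
    ψ q ≤ volume.real (approxBox x i j ψ q) := by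
  rw [measureReal_approxBox x i j hψ]
  have hle : ∀ {e : ℝ}, 0 < e → ψ q ^ e ≤ min 1 (2 * ψ q ^ e) := fun {e} he =>
    le_min (Real.rpow_le_one hψ hψ₁ he.le) (by linarith [Real.rpow_nonneg hψ e])
  calc ψ q = ψ q ^ i * ψ q ^ j := (rpow_mul_rpow_of_add_eq_one hij hψ).symm
    _ ≤ _ := mul_le_mul (hle hi) (hle hj) (by positivity) (le_min zero_le_one (by positivity))

lemma dist_le_of_approxBox_inter_nonempty (x : ℝ × ℝ) {i j : ℝ} (hi : 0 < i) (hj : 0 < j)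
    {ψ : ℕ → ℝ} (hψ : ∀ r, 0 ≤ ψ r) (hanti : Antitone ψ) {q s : ℕ} (hqs : q ≤ s)
    (h : (approxBox x i j ψ q ∩ approxBox x i j ψ s).Nonempty) :
    dist (s • (x.1 : 𝕋)) (q • (x.1 : 𝕋)) ≤ 2 * ψ q ^ i ∧
      dist (s • (x.2 : 𝕋)) (q • (x.2 : 𝕋)) ≤ 2 * ψ q ^ j := by
  obtain ⟨z, ⟨hq₁, hq₂⟩, ⟨hs₁, hs₂⟩⟩ := h
  have hmono : ∀ {e : ℝ}, 0 < e → ψ s ^ e ≤ ψ q ^ e := fun he =>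
    Real.rpow_le_rpow (hψ s) (hanti hqs) he.le
  constructor
  · linarith [dist_triangle_right (s • (x.1 : 𝕋)) (q • (x.1 : 𝕋)) z.1, mem_closedBall'.1 hq₁,
      mem_closedBall'.1 hs₁, hmono hi]
  · linarith [dist_triangle_right (s • (x.2 : 𝕋)) (q • (x.2 : 𝕋)) z.2, mem_closedBall'.1 hq₂,
      mem_closedBall'.1 hs₂, hmono hj]

lemma BadWith.add_lt_of_dist_le {i j c : ℝ} {x : ℝ × ℝ} (hbad : BadWith i j c x) (hi : 0 < i)
    (hj : 0 < j) {ρ : ℝ} (hρ : 0 < ρ) {q s s' : ℕ} (hss' : s < s')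
    (hs : dist (s • (x.1 : 𝕋)) (q • (x.1 : 𝕋)) ≤ 2 * ρ ^ i ∧
      dist (s • (x.2 : 𝕋)) (q • (x.2 : 𝕋)) ≤ 2 * ρ ^ j)
    (hs' : dist (s' • (x.1 : 𝕋)) (q • (x.1 : 𝕋)) ≤ 2 * ρ ^ i ∧
      dist (s' • (x.2 : 𝕋)) (q • (x.2 : 𝕋)) ≤ 2 * ρ ^ j) :
    s + c / (sepConst i j * ρ) < s' := by
  have hgap : ∀ {y : 𝕋} {e : ℝ}, dist (s • y) (q • y) ≤ 2 * ρ ^ e →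
      dist (s' • y) (q • y) ≤ 2 * ρ ^ e → ‖(s' - s) • y‖ ≤ 4 * ρ ^ e := fun {y} _ h h' => by
    rw [sub_nsmul y hss'.le, ← sub_eq_add_neg, ← dist_eq_norm]
    linarith [dist_triangle_right (s' • y) (s • y) (q • y)]
  have := hbad.div_lt hi hj hρ (Nat.sub_pos_of_lt hss') (hgap hs.1 hs'.1) (hgap hs.2 hs'.2)
  rw [Nat.cast_sub hss'.le] at this
  linarith

lemma sum_measureReal_approxBox_inter_le {i j c : ℝ} {x : ℝ × ℝ} (hi : 0 < i) (hj : 0 < j)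
    (hij : i + j = 1) (hbad : BadWith i j c x) (hc : 0 < c) {ψ : ℕ → ℝ} (hψ : ∀ r, 0 < ψ r)
    (hanti : Antitone ψ) {q M : ℕ} {J : Finset ℕ} (hJ : ∀ s ∈ J, q < s ∧ s < M) :
    ∑ s ∈ J, volume.real (approxBox x i j ψ q ∩ approxBox x i j ψ s) ≤
      8 * sepConst i j / c * ψ q * ∑ r ∈ Finset.range M, ψ r := by
  classical
  set B := approxBox x i j ψ
  set g := c / (sepConst i j * ψ q)
  have hg : 0 < g := div_pos hc (mul_pos (sepConst_pos i j) (hψ q))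
  set J' := J.filter fun s => volume.real (B q ∩ B s) ≠ 0
  have hnear : ∀ s ∈ insert q J', dist (s • (x.1 : 𝕋)) (q • (x.1 : 𝕋)) ≤ 2 * ψ q ^ i ∧
      dist (s • (x.2 : 𝕋)) (q • (x.2 : 𝕋)) ≤ 2 * ψ q ^ j := by
    intro s hs
    rcases Finset.mem_insert.1 hs with hsq | hs
    · have := (hψ q).le
      simp only [hsq, dist_self]
      constructor <;> positivity
    · obtain ⟨hsJ, hs0⟩ := Finset.mem_filter.1 hs
      refine dist_le_of_approxBox_inter_nonempty x hi hj (fun r => (hψ r).le) hanti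
        (hJ s hsJ).1.le (nonempty_of_measure_ne_zero (μ := volume) fun h => hs0 ?_)
      rw [measureReal_def, h, ENNReal.toReal_zero]
  have hsep : ∀ s ∈ insert q J', ∀ s' ∈ insert q J', s < s' → s + g < s' :=
    fun s hs s' hs' hss' => hbad.add_lt_of_dist_le hi hj (hψ q) hss' (hnear s hs) (hnear s' hs')
  have hsparse : ∑ s ∈ J', ψ s ≤ 2 / g * ∑ r ∈ Finset.range M, ψ r := by
    refine sum_le_two_div_mul_sum_range_of_separated (fun r => (hψ r).le) hanti hg ?_ ?_ ?_
    · exact fun s hs => Finset.mem_range.2 (hJ s (Finset.mem_filter.1 hs).1).2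
    · intro s hs
      have := hsep q (Finset.mem_insert_self q J') s (Finset.mem_insert_of_mem hs)
        (hJ s (Finset.mem_filter.1 hs).1).1
      linarith [(Nat.cast_nonneg q : (0 : ℝ) ≤ q)]
    · exact fun s hs s' hs' =>
        hsep s (Finset.mem_insert_of_mem hs) s' (Finset.mem_insert_of_mem hs')
  calc ∑ s ∈ J, volume.real (B q ∩ B s) = ∑ s ∈ J', volume.real (B q ∩ B s) :=
        (Finset.sum_filter_ne_zero J).symm
    _ ≤ ∑ s ∈ J', 4 * ψ s := by
        gcongr with s
        exact (measureReal_mono inter_subset_right).trans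
          (measureReal_approxBox_le x hij (hψ s).le)
    _ ≤ 4 * (2 / g * ∑ r ∈ Finset.range M, ψ r) := by
        rw [← Finset.mul_sum]
        gcongr
    _ = 8 * sepConst i j / c * ψ q * ∑ r ∈ Finset.range M, ψ r := by
        simp only [g]
        field_simp
        ring

lemma sum_sum_measureReal_approxBox_inter_le {i j c : ℝ} {x : ℝ × ℝ} (hi : 0 < i) (hj : 0 < j)
    (hij : i + j = 1) (hbad : BadWith i j c x) (hc : 0 < c) {ψ : ℕ → ℝ} (hψ : ∀ r, 0 < ψ r)
    (hanti : Antitone ψ) (N M : ℕ) :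
    ∑ q ∈ Finset.Ico N M, ∑ s ∈ Finset.Ico N M,
        volume.real (approxBox x i j ψ q ∩ approxBox x i j ψ s) ≤
      ∑ q ∈ Finset.Ico N M, volume.real (approxBox x i j ψ q) +
        16 * sepConst i j / c * (∑ q ∈ Finset.Ico N M, ψ q) * ∑ r ∈ Finset.range M, ψ r := by
  rw [Finset.sum_sum_eq_sum_diag_add_two_nsmul _ fun q s => by rw [inter_comm]]
  simp only [inter_self, nsmul_eq_mul]
  apply add_le_add le_rfl
  calc 2 * ∑ q ∈ Finset.Ico N M, ∑ s ∈ Finset.Ico N M with q < s,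
          volume.real (approxBox x i j ψ q ∩ approxBox x i j ψ s)
      ≤ 2 * ∑ q ∈ Finset.Ico N M, 8 * sepConst i j / c * ψ q * ∑ r ∈ Finset.range M, ψ r := by
        gcongr with q
        refine sum_measureReal_approxBox_inter_le hi hj hij hbad hc hψ hanti fun s hs => ?_
        simp only [Finset.mem_filter, Finset.mem_Ico] at hs
        exact ⟨hs.2, hs.1.2⟩
    _ = _ := by rw [← Finset.sum_mul, ← Finset.mul_sum]; ring

lemma exists_le_measureReal_biUnion_approxBox {i j c : ℝ} {x : ℝ × ℝ} (hi : 0 < i) (hj : 0 < j)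
    (hij : i + j = 1) (hbad : BadWith i j c x) (hc : 0 < c) {ψ : ℕ → ℝ} (hψ : ∀ r, 0 < ψ r)
    (hanti : Antitone ψ) (hψ₁ : ∀ r, ψ r ≤ 1) (hdiv : ¬ Summable ψ) (N : ℕ) :
    ∃ M, c / (32 * sepConst i j) ≤
      volume.real (⋃ q ∈ Finset.Ico N M, approxBox x i j ψ q) := by
  set K := 16 * sepConst i j / c
  have hK : 0 < K := div_pos (mul_pos (by norm_num) (sepConst_pos i j)) hc
  set P : ℕ → ℝ := fun n => ∑ r ∈ Finset.range n, ψ r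
  have hP : Tendsto P atTop atTop :=
    (not_summable_iff_tendsto_nat_atTop_of_nonneg fun r => (hψ r).le).1 hdiv
  obtain ⟨M, hMP, hNM⟩ := ((hP.eventually_ge_atTop ((1 + 2 * K * P N) / K)).and
    (eventually_ge_atTop N)).exists
  rw [div_le_iff₀' hK] at hMP
  -- this choice of `M` makes `K * S ≥ 1 + K * P N`, which is what the Chung–Erdős ratio needs
  refine ⟨M, ?_⟩
  have hCE := sq_sum_measureReal_le_measureReal_biUnion_mul volume (Finset.Ico N M)
    (measurableSet_approxBox x i j ψ)
  have hpairs := sum_sum_measureReal_approxBox_inter_le hi hj hij hbad hc hψ hanti N M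
  have hS : ∑ q ∈ Finset.Ico N M, ψ q = P M - P N := Finset.sum_Ico_eq_sub _ hNM
  set U := ⋃ q ∈ Finset.Ico N M, approxBox x i j ψ q
  set S := ∑ q ∈ Finset.Ico N M, ψ q
  set v := ∑ q ∈ Finset.Ico N M, volume.real (approxBox x i j ψ q)
  have hPN : 0 ≤ P N := Finset.sum_nonneg fun r _ => (hψ r).le
  have hKS : 1 + K * P N ≤ K * S := by
    rw [hS, mul_sub]
    linarith
  have hSv : S ≤ v :=
    Finset.sum_le_sum fun q _ => le_measureReal_approxBox x hi hj hij (hψ q).le (hψ₁ q)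
  have hS0 : 0 < S := by nlinarith
  have hD : v + K * S * P M ≤ 2 * K * v ^ 2 := by
    have hPM : K * P M = K * S + K * P N := by rw [hS]; ring
    calc v + K * S * P M = v + S * (K * S + K * P N) := by rw [← hPM]; ring
      _ ≤ v + v * (2 * K * S - 1) := by gcongr; linarith
      _ = 2 * K * v * S := by ring
      _ ≤ 2 * K * v * v := by gcongr
      _ = 2 * K * v ^ 2 := by ring
  have hUv : 1 * v ^ 2 ≤ (2 * K * volume.real U) * v ^ 2 := by
    calc 1 * v ^ 2 ≤ volume.real U * (v + K * S * P M) :=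
          (one_mul (v ^ 2)).symm ▸ hCE.trans (by gcongr)
      _ ≤ volume.real U * (2 * K * v ^ 2) := by gcongr
      _ = (2 * K * volume.real U) * v ^ 2 := by ring
  have := le_of_mul_le_mul_right hUv (pow_pos (hS0.trans_le hSv) 2)
  rw [show c / (32 * sepConst i j) = 1 / (2 * K) by simp only [K]; field_simp; ring,
    div_le_iff₀ (by positivity)]
  linarith

lemma ofReal_le_volume_limsup_approxBox {i j c : ℝ} {x : ℝ × ℝ} (hi : 0 < i) (hj : 0 < j)
    (hij : i + j = 1) (hbad : BadWith i j c x) (hc : 0 < c) {ψ : ℕ → ℝ} (hψ : ∀ r, 0 < ψ r)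
    (hanti : Antitone ψ) (hψ₁ : ∀ r, ψ r ≤ 1) (hdiv : ¬ Summable ψ) :
    ENNReal.ofReal (c / (32 * sepConst i j)) ≤ volume (limsup (approxBox x i j ψ) atTop) := by
  refine le_measure_limsup_atTop (measurableSet_approxBox x i j ψ) fun N => ?_
  obtain ⟨M, hM⟩ := exists_le_measureReal_biUnion_approxBox hi hj hij hbad hc hψ hanti hψ₁ hdiv N
  calc ENNReal.ofReal (c / (32 * sepConst i j))
      ≤ ENNReal.ofReal (volume.real (⋃ q ∈ Finset.Ico N M, approxBox x i j ψ q)) :=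
        ENNReal.ofReal_le_ofReal hM
    _ = volume (⋃ q ∈ Finset.Ico N M, approxBox x i j ψ q) :=
        ofReal_measureReal (measure_ne_top _ _)
    _ ≤ volume (⋃ q ≥ N, approxBox x i j ψ q) :=
        measure_mono (biUnion_subset_biUnion_left fun q hq => (Finset.mem_Ico.1 hq).1)

lemma measurePreserving_coe_prod :
    MeasurePreserving (fun γ : ℝ × ℝ => ((γ.1 : 𝕋), (γ.2 : 𝕋)))
      (volume.restrict (Ioc (0 : ℝ) 1 ×ˢ Ioc (0 : ℝ) 1)) volume := by
  have h := UnitAddCircle.measurePreserving_mk 0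
  rw [zero_add] at h
  have h₂ := h.prod h
  rw [Measure.prod_restrict, ← Measure.volume_eq_prod, ← Measure.volume_eq_prod] at h₂
  exact h₂

lemma mem_twistedW_of_mem_limsup {i j : ℝ} {x : ℝ × ℝ} (hi : 0 < i) (hj : 0 < j) {ψ : ℕ → ℝ}
    (hψ : ∀ r, 0 ≤ ψ r) {γ : ℝ × ℝ} (hγ : γ ∈ Icc 0 1)
    (hlim : ((γ.1 : 𝕋), (γ.2 : 𝕋)) ∈ limsup (approxBox x i j ψ) atTop) :
    γ ∈ twistedW x i j ψ := by
  refine ⟨hγ, ?_⟩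
  rw [mem_limsup_iff_frequently_mem, Nat.frequently_atTop_iff_infinite] at hlim
  refine ((hlim.sdiff (finite_singleton 0)).image Nat.cast_injective.injOn).mono ?_
  rintro _ ⟨q, ⟨⟨h₁, h₂⟩, hq0⟩, rfl⟩
  have hball : ∀ {y z e : ℝ}, 0 < e → (z : 𝕋) ∈ closedBall (q • (y : 𝕋)) (ψ q ^ e) →
      pw (nint (q * y - z)) e ≤ ψ q := fun he h => by
    refine pw_le_of_le_rpow he (abs_nonneg _) (hψ q) ?_
    rwa [nint_eq_norm, AddCircle.coe_sub, coe_natCast_mul, ← dist_eq_norm, dist_comm]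
  refine ⟨by exact_mod_cast hq0, ?_⟩
  simpa only [Int.cast_natCast, Int.natAbs_natCast] using max_le (hball hi h₁) (hball hj h₂)

lemma twistedW_mono (x : ℝ × ℝ) (i j : ℝ) {φ ψ : ℕ → ℝ} (h : ∀ r, φ r ≤ ψ r) :
    twistedW x i j φ ⊆ twistedW x i j ψ :=
  fun _ ⟨hγ, hinf⟩ => ⟨hγ, hinf.mono fun _ hq => ⟨hq.1, hq.2.trans (h _)⟩⟩

lemma ofReal_le_volume_twistedW {i j c : ℝ} {x : ℝ × ℝ} (hi : 0 < i) (hj : 0 < j)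
    (hij : i + j = 1) (hbad : BadWith i j c x) (hc : 0 < c) {ψ : ℕ → ℝ} (hψ : ∀ r, 0 < ψ r)
    (hanti : Antitone ψ) (hψ₁ : ∀ r, ψ r ≤ 1) (hdiv : ¬ Summable ψ) :
    ENNReal.ofReal (c / (32 * sepConst i j)) ≤ volume (twistedW x i j ψ) := by
  set L := limsup (approxBox x i j ψ) atTop
  have hL : MeasurableSet L := MeasurableSet.measurableSet_limsup (measurableSet_approxBox x i j ψ)
  calc ENNReal.ofReal (c / (32 * sepConst i j)) ≤ volume L :=
        ofReal_le_volume_limsup_approxBox hi hj hij hbad hc hψ hanti hψ₁ hdiv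
    _ = volume (Ioc (0 : ℝ) 1 ×ˢ Ioc (0 : ℝ) 1 ∩
          (fun γ : ℝ × ℝ => ((γ.1 : 𝕋), (γ.2 : 𝕋))) ⁻¹' L) := by
        rw [inter_comm, ← Measure.restrict_apply (measurePreserving_coe_prod.measurable hL),
          measurePreserving_coe_prod.measure_preimage hL.nullMeasurableSet]
    _ ≤ volume (twistedW x i j ψ) := measure_mono fun γ ⟨⟨h₁, h₂⟩, hγL⟩ =>
        mem_twistedW_of_mem_limsup hi hj (fun r => (hψ r).le)
          ⟨⟨h₁.1.le, h₂.1.le⟩, ⟨h₁.2, h₂.2⟩⟩ hγL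

theorem stmt10 (i j : ℝ) (hi : 0 < i) (hj : 0 < j) (hij : i + j = 1)
    (x : ℝ × ℝ) (hx : Badij i j x) :
    ∃ κ : ENNReal, 0 < κ ∧ ∀ ψ : ℕ → ℝ, (∀ r, 0 < ψ r) → Antitone ψ →
      ¬ Summable ψ → κ ≤ volume (twistedW x i j ψ) := by
  obtain ⟨-, c, hc, hbad⟩ := hx
  have hA := sepConst_pos i j
  refine ⟨ENNReal.ofReal (c / (32 * sepConst i j)), ENNReal.ofReal_pos.2 (by positivity),
    fun ψ hψ hanti hdiv => ?_⟩
  -- rescaling to `ψ ≤ 1` keeps divergence and only shrinks `twistedW`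
  set C := max 1 (ψ 0)
  have hC : 0 < C := lt_max_of_lt_left one_pos
  calc ENNReal.ofReal (c / (32 * sepConst i j)) ≤ volume (twistedW x i j fun r => ψ r / C) :=
        ofReal_le_volume_twistedW hi hj hij hbad hc (fun r => div_pos (hψ r) hC)
          (fun _ _ h => div_le_div_of_nonneg_right (hanti h) hC.le)
          (fun r => div_le_one_of_le₀ ((hanti r.zero_le).trans (le_max_right _ _)) hC.le)
          (mt (summable_div_const_iff hC.ne').1 hdiv)
    _ ≤ volume (twistedW x i j ψ) :=
        measure_mono (twistedW_mono x i j fun r => div_le_self (hψ r).le (le_max_left _ _))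
end
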